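/- arXiv:2307.11322 — 3 statements merged into one kernel-verified Lean document; each statement's English description precedes it below -/
import Mathlib

section
/- Let (X,d) be a compact metric space and T : X → X a continuous map satisfying the Closing Lemma and having a point with dense orbit. Let (g_n)_{n≥1} be a sequence of continuous functions g_n : X → ℝ that is almost additive with respect to T (with some constant C > 0) and has bounded variation. Then the following are equivalent: (1) lim_{n→∞} ‖g_n‖_∞/n = 0; (2) sup_{n≥1} ‖g_n‖_∞ < ∞; (3) there exists K > 0 such that |g_n(p)| ≤ K for all p ∈ X and n ≥ 1 with T^n(p) = p. -/
open Filter MeasureTheory Topology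

theorem statement0 {X : Type*} [MetricSpace X] [CompactSpace X]
    (T : X → X) (hT : Continuous T)
    (hClosing : ∀ ε > (0 : ℝ), ∃ δ > (0 : ℝ), ∀ (x : X) (n : ℕ), 1 ≤ n →
      dist (T^[n] x) x < δ →
      ∃ y : X, T^[n] y = y ∧ ∀ k < n, dist (T^[k] x) (T^[k] y) < ε)
    (hDense : ∃ x : X, Dense (Set.range fun n : ℕ => T^[n] x))
    (g : ℕ → X → ℝ) (hg : ∀ n, Continuous (g n))
    (C : ℝ) (hC : 0 < C)
    (hAA : ∀ (x : X) (n m : ℕ), 1 ≤ n → 1 ≤ m →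
      -C + g n x + g m (T^[n] x) ≤ g (n + m) x ∧
        g (n + m) x ≤ g n x + g m (T^[n] x) + C)
    (hBV : ∃ ε > (0 : ℝ), ∃ M > (0 : ℝ), ∀ (n : ℕ), 1 ≤ n → ∀ x y : X,
      (∀ k < n, dist (T^[k] x) (T^[k] y) < ε) → |g n x - g n y| ≤ M) :
    List.TFAE
      [ Tendsto (fun n : ℕ => (⨆ x : X, |g n x|) / (n : ℝ)) atTop (nhds 0),
        ∃ K : ℝ, ∀ (n : ℕ), 1 ≤ n → ∀ x : X, |g n x| ≤ K,
        ∃ K > (0 : ℝ), ∀ (p : X) (n : ℕ), 1 ≤ n → T^[n] p = p → |g n p| ≤ K ] := by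
  classical
  obtain ⟨x₀, -⟩ := hDense
  have hNE : Nonempty X := ⟨x₀⟩
  have hbdd : ∀ m : ℕ, BddAbove (Set.range fun x : X => |g m x|) := fun m =>
    (isCompact_range ((hg m).abs)).bddAbove
  have hle : ∀ (m : ℕ) (x : X), |g m x| ≤ ⨆ x : X, |g m x| := fun m x =>
    le_ciSup (hbdd m) x
  have hS0 : ∀ m : ℕ, 0 ≤ ⨆ x : X, |g m x| := fun m =>
    le_trans (abs_nonneg _) (hle m x₀)
  tfae_have 2 → 1 := by
    rintro ⟨K, hK⟩
    have h0 : Tendsto (fun n : ℕ => K / (n : ℝ)) atTop (nhds 0) :=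
      tendsto_const_div_atTop_nhds_zero_nat K
    refine tendsto_of_tendsto_of_tendsto_of_le_of_le' tendsto_const_nhds h0 ?_ ?_
    · filter_upwards [eventually_ge_atTop 1] with n hn
      exact div_nonneg (hS0 n) (by positivity)
    · filter_upwards [eventually_ge_atTop 1] with n hn
      have hsup : (⨆ x : X, |g n x|) ≤ K := ciSup_le fun x => hK n hn x
      have hn0 : (0 : ℝ) < (n : ℝ) := by exact_mod_cast hn
      exact div_le_div_of_nonneg_right hsup hn0.le
  tfae_have 1 → 3 := by
    intro h1
    refine ⟨C, hC, fun p n hn hp => ?_⟩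
    have hper : ∀ k : ℕ, T^[n * k] p = p := fun k => by
      rw [Function.iterate_mul]; exact Function.iterate_fixed hp k
    have hbound : ∀ k : ℕ, 1 ≤ k →
        (k : ℝ) * g n p - (k : ℝ) * C ≤ g (n * k) p ∧
          g (n * k) p ≤ (k : ℝ) * g n p + (k : ℝ) * C := by
      intro k hk
      induction k with
      | zero => omega
      | succ k ih =>
        rcases Nat.eq_zero_or_pos k with hk0 | hk1
        · subst hk0; norm_num
          linarith
        · obtain ⟨ih1, ih2⟩ := ih hk1
          have haa := hAA p (n * k) n
            (Nat.one_le_iff_ne_zero.mpr (Nat.mul_ne_zero (by omega) (by omega))) hn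
          rw [hper k] at haa
          have heq : n * (k + 1) = n * k + n := by ring
          rw [heq]
          push_cast
          constructor <;> nlinarith [haa.1, haa.2]
    have key : ∀ k : ℕ, 1 ≤ k →
        |g n p| - C ≤ (⨆ x : X, |g (n * k) x|) / (k : ℝ) := by
      intro k hk
      obtain ⟨h1', h2'⟩ := hbound k hk
      have hk0 : (0 : ℝ) < (k : ℝ) := by exact_mod_cast hk
      have hS := hle (n * k) p
      have hub : (k : ℝ) * g n p ≤ (⨆ x : X, |g (n * k) x|) + (k : ℝ) * C := by
        nlinarith [le_abs_self (g (n * k) p)]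
      have hlb : -((⨆ x : X, |g (n * k) x|) + (k : ℝ) * C) ≤ (k : ℝ) * g n p := by
        nlinarith [neg_abs_le (g (n * k) p)]
      have habs : (k : ℝ) * |g n p| ≤ (⨆ x : X, |g (n * k) x|) + (k : ℝ) * C := by
        have h := abs_le.mpr ⟨hlb, hub⟩
        rwa [abs_mul, abs_of_pos hk0] at h
      rw [le_div_iff₀ hk0]
      nlinarith
    -- pass to the limit
    have hmul : Tendsto (fun k : ℕ => n * k) atTop atTop :=
      tendsto_atTop_mono (fun k => Nat.le_mul_of_pos_left k (by omega)) tendsto_id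
    have h2 : Tendsto (fun k : ℕ => (⨆ x : X, |g (n * k) x|) / ((n * k : ℕ) : ℝ))
        atTop (nhds 0) := h1.comp hmul
    have h3 := h2.const_mul (n : ℝ)
    rw [mul_zero] at h3
    have heq : ∀ k : ℕ, (n : ℝ) * ((⨆ x : X, |g (n * k) x|) / ((n * k : ℕ) : ℝ))
        = (⨆ x : X, |g (n * k) x|) / (k : ℝ) := by
      intro k
      push_cast
      rw [← mul_div_assoc, mul_div_mul_left _ _ (Nat.cast_ne_zero.mpr (by omega) : (n : ℝ) ≠ 0)]
    have h4 : Tendsto (fun k : ℕ => (⨆ x : X, |g (n * k) x|) / (k : ℝ)) atTop (nhds 0) :=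
      h3.congr heq
    have hfin : |g n p| - C ≤ 0 := by
      refine ge_of_tendsto h4 ?_
      filter_upwards [eventually_ge_atTop 1] with k hk using key k hk
    linarith [abs_nonneg (g n p)]
  tfae_have 3 → 2 := by
    rintro ⟨K, hKpos, hper⟩
    obtain ⟨ε, hε, M, hM, hbv⟩ := hBV
    obtain ⟨δ, hδ, hclose⟩ := hClosing ε hε
    obtain ⟨t, -, htfin, htcover⟩ := finite_cover_balls_of_compact
      (isCompact_univ : IsCompact (Set.univ : Set X)) (half_pos hδ)
    have hcov : ∀ x : X, ∃ p, p ∈ htfin.toFinset ∧ dist x p < δ / 2 := by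
      intro x
      have hx := htcover (Set.mem_univ x)
      simp only [Set.mem_iUnion] at hx
      obtain ⟨p, hp, hxp⟩ := hx
      exact ⟨p, htfin.mem_toFinset.mpr hp, by simpa [Metric.mem_ball] using hxp⟩
    choose c hc1 hc2 using hcov
    -- a uniform bound for g 1
    set G1 := ⨆ x : X, |g 1 x| with hG1def
    have hG1 : ∀ x : X, |g 1 x| ≤ G1 := hle 1
    have hG1nn : 0 ≤ G1 := hS0 1
    set B := K + M + G1 + 2 * C with hBdef
    have hBpos : 0 < B := by linarith
    -- triangle inequality from almost additivity
    have tri : ∀ (a b : ℕ), 1 ≤ a → 1 ≤ b → ∀ z : X,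
        |g (a + b) z| ≤ |g a z| + |g b (T^[a] z)| + C := by
      intro a b ha hb z
      obtain ⟨h1, h2⟩ := hAA z a b ha hb
      have e1 := le_abs_self (g a z)
      have e2 := neg_abs_le (g a z)
      have e3 := le_abs_self (g b (T^[a] z))
      have e4 := neg_abs_le (g b (T^[a] z))
      rw [abs_le]
      constructor <;> linarith
    -- loop bound via the closing lemma
    have loop : ∀ (m : ℕ), 1 ≤ m → ∀ z : X, dist (T^[m] z) z < δ → |g m z| ≤ K + M := by
      intro m hm z hz
      obtain ⟨y, hy, hcl⟩ := hclose z m hm hz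
      have h1 := hbv m hm z y hcl
      have h2 := hper y m hm hy
      have h3 := abs_sub_abs_le_abs_sub (g m z) (g m y)
      linarith
    -- main inductive bound
    have main : ∀ (N : ℕ) (F : Finset X), F.card ≤ N → ∀ n : ℕ, 1 ≤ n → ∀ z : X,
        (∀ k, k < n → c (T^[k] z) ∈ F) → |g n z| ≤ (F.card : ℝ) * B := by
      intro N
      induction N with
      | zero =>
        intro F hF n hn z hsym
        have h0 : c (T^[0] z) ∈ F := hsym 0 hn
        have hFe : F = ∅ := Finset.card_eq_zero.mp (Nat.le_zero.mp hF)
        rw [hFe] at h0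
        exact absurd h0 (Finset.notMem_empty _)
      | succ N ih =>
        intro F hF n hn z hsym
        have hσ : c z ∈ F := by simpa using hsym 0 hn
        have hcard1 : 1 ≤ F.card := Finset.card_pos.mpr ⟨_, hσ⟩
        have hcard1' : (1 : ℝ) ≤ (F.card : ℝ) := by exact_mod_cast hcard1
        set b := Nat.findGreatest (fun k => c (T^[k] z) = c z) (n - 1) with hbdef
        have hP0 : c (T^[0] z) = c z := by rw [Function.iterate_zero_apply]
        have hb_le : b ≤ n - 1 := Nat.findGreatest_le _
        have hb_lt : b < n := lt_of_le_of_lt hb_le (by omega)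
        have hbP : c (T^[b] z) = c z := by
          have h := Nat.findGreatest_spec (P := fun k => c (T^[k] z) = c z)
            (Nat.zero_le (n - 1)) hP0
          rwa [← hbdef] at h
        have hb_max : ∀ k, b < k → k < n → c (T^[k] z) ≠ c z := by
          intro k hk1 hk2
          rw [hbdef] at hk1
          exact Nat.findGreatest_is_greatest hk1 (by omega)
        have hloopb : 1 ≤ b → |g b z| ≤ K + M := by
          intro hb1
          apply loop b hb1 z
          have d1 : dist (T^[b] z) (c z) < δ / 2 := by
            have := hc2 (T^[b] z); rwa [hbP] at this
          have d2 : dist z (c z) < δ / 2 := hc2 z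
          calc dist (T^[b] z) z ≤ dist (T^[b] z) (c z) + dist (c z) z := dist_triangle _ _ _
            _ = dist (T^[b] z) (c z) + dist z (c z) := by rw [dist_comm (c z) z]
            _ < δ := by linarith
        rcases eq_or_lt_of_le (Nat.succ_le_of_lt hb_lt) with hcase | hcase
        · -- b + 1 = n
          rcases Nat.eq_zero_or_pos b with hb0 | hb1
          · have hn1 : n = 1 := by omega
            calc |g n z| = |g 1 z| := by rw [hn1]
              _ ≤ G1 := hG1 z
              _ ≤ (F.card : ℝ) * B := by nlinarith
          · have heq : n = b + 1 := by omega
            calc |g n z| = |g (b + 1) z| := by rw [heq]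
              _ ≤ |g b z| + |g 1 (T^[b] z)| + C := tri b 1 hb1 le_rfl z
              _ ≤ (K + M) + G1 + C := by linarith [hloopb hb1, hG1 (T^[b] z)]
              _ ≤ (F.card : ℝ) * B := by nlinarith
        · -- b + 1 < n
          set m := n - (b + 1) with hmdef
          have hm1 : 1 ≤ m := by omega
          set w := T^[b + 1] z with hwdef
          have htail : ∀ k, k < m → c (T^[k] w) ∈ F.erase (c z) := by
            intro k hk
            have hiter : T^[k] w = T^[k + (b + 1)] z :=
              (Function.iterate_add_apply T k (b + 1) z).symm
            rw [hiter]
            refine Finset.mem_erase.mpr ⟨?_, hsym _ (by omega)⟩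
            exact hb_max (k + (b + 1)) (by omega) (by omega)
          have hercard : (F.erase (c z)).card ≤ N := by
            have := Finset.card_erase_of_mem hσ; omega
          have ihm := ih (F.erase (c z)) hercard m hm1 w htail
          have hce : ((F.erase (c z)).card : ℝ) + 1 = (F.card : ℝ) := by
            exact_mod_cast Finset.card_erase_add_one hσ
          rcases Nat.eq_zero_or_pos b with hb0 | hb1
          · have heq : n = 1 + m := by omega
            have hw1 : T^[1] z = w := by rw [hwdef, hb0]
            calc |g n z| = |g (1 + m) z| := by rw [heq]
              _ ≤ |g 1 z| + |g m (T^[1] z)| + C := tri 1 m le_rfl hm1 z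
              _ ≤ G1 + ((F.erase (c z)).card : ℝ) * B + C := by
                  rw [hw1]; linarith [hG1 z, ihm]
              _ ≤ (F.card : ℝ) * B := by nlinarith
          · have heq : n = b + (1 + m) := by omega
            have hw1 : T^[1] (T^[b] z) = w := by
              rw [hwdef, ← Function.iterate_add_apply, Nat.add_comm]
            calc |g n z| = |g (b + (1 + m)) z| := by rw [heq]
              _ ≤ |g b z| + |g (1 + m) (T^[b] z)| + C := tri b (1 + m) hb1 (by omega) z
              _ ≤ (K + M) + (|g 1 (T^[b] z)| + |g m (T^[1] (T^[b] z))| + C) + C := by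
                  linarith [hloopb hb1, tri 1 m le_rfl hm1 (T^[b] z)]
              _ ≤ (K + M) + (G1 + ((F.erase (c z)).card : ℝ) * B + C) + C := by
                  rw [hw1]; linarith [hG1 (T^[b] z), ihm]
              _ = B + ((F.erase (c z)).card : ℝ) * B := by rw [hBdef]; ring
              _ = (F.card : ℝ) * B := by rw [← hce]; ring
    exact ⟨(htfin.toFinset.card : ℝ) * B, fun n hn x =>
      main htfin.toFinset.card htfin.toFinset le_rfl n hn x (fun k _ => hc1 _)⟩
  tfae_finish
end

section
/- Let (X,d) be a compact metric space and T : X → X a continuous map satisfying the Closing Lemma and having a point with dense orbit. Let (f_n)_{n≥1} be a sequence of continuous functions that is almost additive with respect to T (with some constant C > 0) and has bounded variation, and let f : X → ℝ be a continuous function such that the additive sequence (S_n f)_{n≥1} has bounded variation. Then lim_{n→∞} (1/n)‖f_n − S_n f‖_∞ = 0 if and only if sup_{n≥1} ‖f_n − S_n f‖_∞ < ∞. Moreover, if f : X → ℝ is continuous and (S_n f)_{n≥1} does not have bounded variation, then sup_{n≥1} ‖f_n − S_n f‖_∞ = ∞. -/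
open Filter MeasureTheory Topology

/-- Birkhoff sum `S_n f = ∑_{k=0}^{n-1} f ∘ T^k`. -/
noncomputable def birkhoff {X : Type*} (T : X → X) (f : X → ℝ) (n : ℕ) (x : X) : ℝ :=
  ∑ k ∈ Finset.range n, f (T^[k] x)

/-!
Put `G_n = f_n - S_n f`; it is almost additive with bounded variation. If `‖G_n‖_∞ = o(n)`,
almost additivity along a periodic orbit of period `p` gives `|G_p y| ≤ C`, and by the Closing
Lemma and bounded variation `|G_n x| ≤ C + M` whenever `T^n x` returns `δ`-close to `x`.
Along the dense orbit of `z`, `m ↦ G_m z` is then a quasi-potential whose increments between two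
visits to the same `δ/2`-ball are bounded; cutting `[a, b)` at the last visit to the ball of `a`
and recursing on the remaining balls bounds `|G_n(T^m z)|` by a multiple of the number of balls,
and density plus bounded variation extend the bound to all of `X`.
-/

open Function Set

section AlmostAdditive

variable {X : Type*}

def IsAlmostAdditive (T : X → X) (G : ℕ → X → ℝ) (C : ℝ) : Prop :=
  ∀ (x : X) (n m : ℕ), 1 ≤ n → 1 ≤ m → |G (n + m) x - G n x - G m (T^[n] x)| ≤ C

def BoundedVariationWith [PseudoMetricSpace X] (T : X → X) (G : ℕ → X → ℝ) (ε M : ℝ) : Prop :=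
  ∀ (n : ℕ), 1 ≤ n → ∀ x y : X, (∀ k < n, dist (T^[k] x) (T^[k] y) < ε) → |G n x - G n y| ≤ M

def HasBoundedVariation [PseudoMetricSpace X] (T : X → X) (G : ℕ → X → ℝ) : Prop :=
  ∃ ε > (0 : ℝ), ∃ M > (0 : ℝ), BoundedVariationWith T G ε M

def SatisfiesClosingLemma [PseudoMetricSpace X] (T : X → X) : Prop :=
  ∀ ε > (0 : ℝ), ∃ δ > (0 : ℝ), ∀ (x : X) (n : ℕ), 1 ≤ n → dist (T^[n] x) x < δ →
    ∃ y : X, IsPeriodicPt T n y ∧ ∀ k < n, dist (T^[k] x) (T^[k] y) < ε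

theorem birkhoff_add (T : X → X) (f : X → ℝ) (n m : ℕ) (x : X) :
    birkhoff T f (n + m) x = birkhoff T f n x + birkhoff T f m (T^[n] x) := by
  unfold birkhoff
  rw [Finset.sum_range_add]
  congr 1
  refine Finset.sum_congr rfl fun k _ => ?_
  rw [← iterate_add_apply, Nat.add_comm]

theorem continuous_birkhoff [TopologicalSpace X] {T : X → X} (hT : Continuous T) {f : X → ℝ}
    (hf : Continuous f) (n : ℕ) : Continuous (birkhoff T f n) :=
  continuous_finsetSum _ fun k _ => hf.comp (hT.iterate k)

theorem IsAlmostAdditive.sub_birkhoff {T : X → X} {G : ℕ → X → ℝ} {C : ℝ}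
    (hG : IsAlmostAdditive T G C) (f : X → ℝ) :
    IsAlmostAdditive T (fun n x => G n x - birkhoff T f n x) C := by
  intro x n m hn hm
  dsimp only
  rw [birkhoff_add]
  convert hG x n m hn hm using 2
  ring

theorem IsAlmostAdditive.nonneg [Nonempty X] {T : X → X} {G : ℕ → X → ℝ} {C : ℝ}
    (hG : IsAlmostAdditive T G C) : 0 ≤ C :=
  (abs_nonneg _).trans (hG (Classical.arbitrary X) 1 1 le_rfl le_rfl)

theorem IsAlmostAdditive.abs_sub_mul_le_of_isPeriodicPt {T : X → X} {G : ℕ → X → ℝ} {C : ℝ}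
    (hG : IsAlmostAdditive T G C) {p : ℕ} (hp : 1 ≤ p) {y : X} (hy : IsPeriodicPt T p y)
    (j : ℕ) : |G (p * (j + 1)) y - (j + 1) * G p y| ≤ j * C := by
  induction j with
  | zero => simp
  | succ j ih =>
    have hstep := hG y (p * (j + 1)) p (Nat.one_le_iff_ne_zero.2 (by positivity)) hp
    rw [(hy.mul_const (j + 1)).eq, show p * (j + 1) + p = p * (j + 1 + 1) by ring] at hstep
    push_cast
    rw [abs_le] at hstep ih ⊢
    constructor <;> linarith

theorem IsAlmostAdditive.abs_le_of_isPeriodicPt {T : X → X} {G : ℕ → X → ℝ} {C : ℝ}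
    (hG : IsAlmostAdditive T G C) {p : ℕ} (hp : 1 ≤ p) {y : X} (hy : IsPeriodicPt T p y)
    (hlim : Tendsto (fun n : ℕ => G n y / n) atTop (𝓝 0)) : |G p y| ≤ C := by
  have hmul : Tendsto (fun j : ℕ => p * (j + 1)) atTop atTop :=
    (tendsto_add_atTop_nat 1).const_mul_atTop' hp
  have hsub : Tendsto (fun j : ℕ => G (p * (j + 1)) y / (j + 1)) atTop (𝓝 0) := by
    have hp0 : (p : ℝ) ≠ 0 := by positivity
    convert (hlim.comp hmul).const_mul (p : ℝ) using 1
    · ext j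
      simp only [comp_apply]
      push_cast
      field_simp
    · rw [mul_zero]
  refine le_of_tendsto_of_tendsto' tendsto_const_nhds (by simpa using hsub.abs.add_const C)
    fun j => ?_
  have : Nonempty X := ⟨y⟩
  have hC := hG.nonneg
  have hj := (abs_sub_abs_le_abs_sub _ _).trans
    ((abs_sub_comm _ _).trans_le (hG.abs_sub_mul_le_of_isPeriodicPt hp hy j))
  have hj1 : (0 : ℝ) < j + 1 := by positivity
  rw [abs_mul, abs_of_pos hj1] at hj
  rw [abs_div, abs_of_pos hj1, ← sub_le_iff_le_add, le_div_iff₀ hj1]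
  nlinarith

theorem IsAlmostAdditive.abs_le_of_dist_iterate_lt [PseudoMetricSpace X] {T : X → X}
    {G : ℕ → X → ℝ} {C ε M δ : ℝ} (hG : IsAlmostAdditive T G C)
    (htend : ∀ x, Tendsto (fun n : ℕ => G n x / n) atTop (𝓝 0))
    (hBV : BoundedVariationWith T G ε M)
    (hclose : ∀ (x : X) (n : ℕ), 1 ≤ n → dist (T^[n] x) x < δ →
      ∃ y : X, IsPeriodicPt T n y ∧ ∀ k < n, dist (T^[k] x) (T^[k] y) < ε)
    {x : X} {n : ℕ} (hn : 1 ≤ n) (hx : dist (T^[n] x) x < δ) : |G n x| ≤ C + M := by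
  obtain ⟨y, hy, hxy⟩ := hclose x n hn hx
  have hGy := hG.abs_le_of_isPeriodicPt hn hy (htend y)
  linarith [abs_sub_abs_le_abs_sub (G n x) (G n y), hBV n hn x y hxy]

theorem abs_sub_le_card_mul_of_coloring {α : Type*} [DecidableEq α] {h : ℕ → ℝ} {c : ℕ → α}
    {A B : ℝ} (hA : 0 ≤ A) (hrep : ∀ i j, i < j → c i = c j → |h j - h i| ≤ A)
    (hstep : ∀ i, |h (i + 1) - h i| ≤ B) (V : Finset α) {a b : ℕ} (hab : a ≤ b)
    (hV : ∀ m, a ≤ m → m < b → c m ∈ V) : |h b - h a| ≤ V.card * (A + B) := by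
  induction V using Finset.strongInduction generalizing a with
  | H V ih =>
  obtain rfl | hlt := hab.eq_or_lt
  · have hB : 0 ≤ B := (abs_nonneg _).trans (hstep 0)
    rw [sub_self, abs_zero]
    positivity
  have haV : c a ∈ V := hV a le_rfl hlt
  -- `l` is the last time in `[a, b)` with the color of `a`; after it that color never recurs.
  let P := (Finset.Ico a b).filter (fun m => c m = c a)
  have haP : a ∈ P := Finset.mem_filter.2 ⟨Finset.mem_Ico.2 ⟨le_rfl, hlt⟩, rfl⟩
  obtain ⟨hl, hcl⟩ := Finset.mem_filter.1 (P.max'_mem ⟨a, haP⟩)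
  set l := P.max' ⟨a, haP⟩
  obtain ⟨hal, hlb⟩ := Finset.mem_Ico.1 hl
  have htail : |h b - h (l + 1)| ≤ (V.card - 1) * (A + B) := by
    rw [← Finset.cast_card_erase_of_mem haV]
    refine ih _ (Finset.erase_ssubset haV) hlb fun m hlm hmb => Finset.mem_erase.2 ⟨?_, ?_⟩
    · intro hcm
      have := P.le_max' m (Finset.mem_filter.2 ⟨Finset.mem_Ico.2 ⟨by omega, hmb⟩, hcm⟩)
      omega
    · exact hV m (by omega) hmb
  have hhead : |h l - h a| ≤ A := by
    obtain hal | hal := hal.eq_or_lt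
    · rw [← hal, sub_self, abs_zero]
      exact hA
    · exact hrep a l hal hcl.symm
  calc |h b - h a| ≤ |h b - h (l + 1)| + (|h (l + 1) - h l| + |h l - h a|) :=
        (abs_sub_le _ _ _).trans (add_le_add_right (abs_sub_le _ _ _) _)
    _ ≤ (V.card - 1) * (A + B) + (B + A) := by gcongr; exact hstep l
    _ = V.card * (A + B) := by ring

theorem IsAlmostAdditive.exists_bound_on_orbit [PseudoMetricSpace X] [CompactSpace X]
    {T : X → X} {G : ℕ → X → ℝ} {C δ R B : ℝ} (hG : IsAlmostAdditive T G C) (hδ : 0 < δ)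
    (hR : 0 ≤ R) {z : X}
    (hret : ∀ i n, 1 ≤ n → dist (T^[n] (T^[i] z)) (T^[i] z) < δ → |G n (T^[i] z)| ≤ R)
    (hB : ∀ x, |G 1 x| ≤ B) : ∃ K, ∀ m n, 1 ≤ n → |G n (T^[m] z)| ≤ K := by
  classical
  have : Nonempty X := ⟨z⟩
  have hC := hG.nonneg
  obtain ⟨t, -, ht, hcover⟩ := 
    finite_cover_balls_of_compact (isCompact_univ (X := X)) (half_pos hδ)
  have hcentre : ∀ m : ℕ, ∃ c ∈ t, dist (T^[m] z) c < δ / 2 := fun m => by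
    simpa using hcover (mem_univ (T^[m] z))
  choose c hct hc using hcentre
  -- `G 0` is unconstrained, so the potential is started from `0` by hand
  let h : ℕ → ℝ := fun m => if m = 0 then 0 else G m z
  have hcocycle : ∀ m n, 1 ≤ n → |h (m + n) - h m - G n (T^[m] z)| ≤ C := by
    intro m n hn
    obtain rfl | hm := Nat.eq_zero_or_pos m
    · simp [h, show n ≠ 0 by omega, hC]
    · simpa [h, show m ≠ 0 by omega] using hG z m n hm hn
  have hrep : ∀ i j, i < j → c i = c j → |h j - h i| ≤ C + R := by
    intro i j hij hcij
    obtain ⟨n, hn, rfl⟩ : ∃ n, 1 ≤ n ∧ j = i + n := ⟨j - i, by omega, by omega⟩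
    have hd : dist (T^[n] (T^[i] z)) (T^[i] z) < δ := by
      rw [← iterate_add_apply, add_comm]
      calc dist (T^[i + n] z) (T^[i] z) ≤ dist (T^[i + n] z) (c i) + dist (T^[i] z) (c i) :=
            dist_triangle_right _ _ _
        _ < δ / 2 + δ / 2 := add_lt_add (hcij ▸ hc (i + n)) (hc i)
        _ = δ := add_halves δ
    have h1 := hcocycle i n hn
    have h2 := hret i n hn hd
    rw [abs_le] at h1 h2 ⊢
    constructor <;> linarith
  have hstep : ∀ i, |h (i + 1) - h i| ≤ C + B := by
    intro i
    have h1 := hcocycle i 1 le_rfl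
    have h2 := hB (T^[i] z)
    rw [abs_le] at h1 h2 ⊢
    constructor <;> linarith
  refine ⟨ht.toFinset.card * ((C + R) + (C + B)) + C, fun m n hn => ?_⟩
  have h1 := abs_sub_le_card_mul_of_coloring (by positivity) hrep hstep ht.toFinset
    (Nat.le_add_right m n) fun k _ _ => ht.mem_toFinset.2 (hct k)
  have h2 := hcocycle m n hn
  rw [abs_le] at h1 h2 ⊢
  constructor <;> linarith

theorem BoundedVariationWith.abs_le_of_dense_orbit [PseudoMetricSpace X] {T : X → X}
    {G : ℕ → X → ℝ} {ε M K : ℝ} (hT : Continuous T) (hε : 0 < ε)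
    (hG : BoundedVariationWith T G ε M) {z : X} (hz : Dense (range fun m : ℕ => T^[m] z))
    (hK : ∀ m n, 1 ≤ n → |G n (T^[m] z)| ≤ K) : ∀ n, 1 ≤ n → ∀ x, |G n x| ≤ K + M := by
  intro n hn x
  have hnear : ∀ᶠ u in 𝓝 x, ∀ k ∈ Finset.range n, dist (T^[k] u) (T^[k] x) < ε :=
    (Finset.eventually_all _).2 fun k _ =>
      (hT.iterate k).continuousAt.eventually (Metric.ball_mem_nhds _ hε)
  obtain ⟨_, ⟨m, rfl⟩, hm⟩ := hz.inter_nhds_nonempty hnear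
  have h1 := hG n hn _ x fun k hk => hm k (Finset.mem_range.2 hk)
  have h2 := hK m n hn
  rw [abs_le] at h1 h2 ⊢
  constructor <;> linarith

theorem IsAlmostAdditive.exists_bound_of_tendsto [PseudoMetricSpace X] [CompactSpace X]
    {T : X → X} {G : ℕ → X → ℝ} {C : ℝ} (hT : Continuous T) (hClosing : SatisfiesClosingLemma T)
    {z : X} (hz : Dense (range fun m : ℕ => T^[m] z)) (hGc : ∀ n, Continuous (G n))
    (hG : IsAlmostAdditive T G C) (hBV : HasBoundedVariation T G)
    (htend : ∀ x, Tendsto (fun n : ℕ => G n x / n) atTop (𝓝 0)) :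
    ∃ K, ∀ n, 1 ≤ n → ∀ x, |G n x| ≤ K := by
  have : Nonempty X := ⟨z⟩
  obtain ⟨ε, hε, M, hM, hGM⟩ := hBV
  obtain ⟨δ, hδ, hclose⟩ := hClosing ε hε
  obtain ⟨B, hB⟩ := (isCompact_range (hGc 1).abs).bddAbove
  obtain ⟨K, hK⟩ := hG.exists_bound_on_orbit hδ (add_nonneg hG.nonneg hM.le)
    (fun i n hn hd => hG.abs_le_of_dist_iterate_lt htend hGM hclose hn hd)
    fun x => hB (mem_range_self x)
  exact ⟨K + M, hGM.abs_le_of_dense_orbit hT hε hz hK⟩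

theorem tendsto_div_of_tendsto_iSup_abs_div [TopologicalSpace X] [CompactSpace X]
    {G : ℕ → X → ℝ} (hGc : ∀ n, Continuous (G n))
    (h : Tendsto (fun n : ℕ => (⨆ x, |G n x|) / n) atTop (𝓝 0)) (x : X) :
    Tendsto (fun n : ℕ => G n x / n) atTop (𝓝 0) :=
  squeeze_zero_norm (fun n => by
    rw [Real.norm_eq_abs, abs_div, Nat.abs_cast]
    exact div_le_div_of_nonneg_right
      (le_ciSup (isCompact_range (hGc n).abs).bddAbove x) n.cast_nonneg) h

theorem tendsto_iSup_abs_div_of_bounded {G : ℕ → X → ℝ} {K : ℝ}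
    (hK : ∀ n, 1 ≤ n → ∀ x, |G n x| ≤ K) :
    Tendsto (fun n : ℕ => (⨆ x, |G n x|) / n) atTop (𝓝 0) := by
  refine squeeze_zero' (Eventually.of_forall fun n => ?_) ?_
    (tendsto_const_div_atTop_nhds_zero_nat (max K 0))
  · exact div_nonneg (Real.iSup_nonneg fun x => abs_nonneg _) n.cast_nonneg
  · filter_upwards [eventually_ge_atTop 1] with n hn
    gcongr
    exact Real.iSup_le (fun x => (hK n hn x).trans (le_max_left K 0)) (le_max_right K 0)

theorem HasBoundedVariation.sub [PseudoMetricSpace X] {T : X → X} {G H : ℕ → X → ℝ}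
    (hG : HasBoundedVariation T G) (hH : HasBoundedVariation T H) :
    HasBoundedVariation T (fun n x => G n x - H n x) := by
  obtain ⟨ε, hε, M, hM, hGM⟩ := hG
  obtain ⟨ε', hε', M', hM', hHM⟩ := hH
  refine ⟨min ε ε', lt_min hε hε', M + M', add_pos hM hM', fun n hn x y hxy => ?_⟩
  have h1 := hGM n hn x y fun k hk => (hxy k hk).trans_le (min_le_left _ _)
  have h2 := hHM n hn x y fun k hk => (hxy k hk).trans_le (min_le_right _ _)
  rw [abs_le] at h1 h2 ⊢
  constructor <;> linarith

theorem HasBoundedVariation.of_abs_sub_le [PseudoMetricSpace X] {T : X → X}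
    {G H : ℕ → X → ℝ} {K : ℝ} (hG : HasBoundedVariation T G)
    (hK : ∀ n, 1 ≤ n → ∀ x, |G n x - H n x| ≤ K) : HasBoundedVariation T H := by
  obtain ⟨ε, hε, M, hM, hGM⟩ := hG
  refine ⟨ε, hε, M + 2 * |K|, by positivity, fun n hn x y hxy => ?_⟩
  have h1 := hGM n hn x y hxy
  have h2 := (hK n hn x).trans (le_abs_self K)
  have h3 := (hK n hn y).trans (le_abs_self K)
  rw [abs_le] at h1 h2 h3 ⊢
  constructor <;> linarith

end AlmostAdditive

theorem statement1_general {X : Type*} [MetricSpace X] [CompactSpace X]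
    (T : X → X) (hT : Continuous T)
    (hClosing : ∀ ε > (0 : ℝ), ∃ δ > (0 : ℝ), ∀ (x : X) (n : ℕ), 1 ≤ n →
      dist (T^[n] x) x < δ →
      ∃ y : X, T^[n] y = y ∧ ∀ k < n, dist (T^[k] x) (T^[k] y) < ε)
    (hDense : ∃ x : X, Dense (Set.range fun n : ℕ => T^[n] x))
    (F : ℕ → X → ℝ) (hF : ∀ n, Continuous (F n))
    (C : ℝ)
    (hAA : ∀ (x : X) (n m : ℕ), 1 ≤ n → 1 ≤ m →
      -C + F n x + F m (T^[n] x) ≤ F (n + m) x ∧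
        F (n + m) x ≤ F n x + F m (T^[n] x) + C)
    (hBV : ∃ ε > (0 : ℝ), ∃ M > (0 : ℝ), ∀ (n : ℕ), 1 ≤ n → ∀ x y : X,
      (∀ k < n, dist (T^[k] x) (T^[k] y) < ε) → |F n x - F n y| ≤ M)
    (f : X → ℝ) (hf : Continuous f) :
    ((∃ ε > (0 : ℝ), ∃ M > (0 : ℝ), ∀ (n : ℕ), 1 ≤ n → ∀ x y : X,
        (∀ k < n, dist (T^[k] x) (T^[k] y) < ε) →
          |birkhoff T f n x - birkhoff T f n y| ≤ M) →
      (Tendsto (fun n : ℕ => (⨆ x : X, |F n x - birkhoff T f n x|) / (n : ℝ))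
          atTop (nhds 0) ↔
        ∃ K : ℝ, ∀ (n : ℕ), 1 ≤ n → ∀ x : X, |F n x - birkhoff T f n x| ≤ K)) ∧
    ((¬ ∃ ε > (0 : ℝ), ∃ M > (0 : ℝ), ∀ (n : ℕ), 1 ≤ n → ∀ x y : X,
        (∀ k < n, dist (T^[k] x) (T^[k] y) < ε) →
          |birkhoff T f n x - birkhoff T f n y| ≤ M) →
      ¬ ∃ K : ℝ, ∀ (n : ℕ), 1 ≤ n → ∀ x : X, |F n x - birkhoff T f n x| ≤ K) := by
  obtain ⟨z, hz⟩ := hDense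
  have hFC : IsAlmostAdditive T F C := fun x n m hn hm => by
    obtain ⟨h1, h2⟩ := hAA x n m hn hm
    exact abs_le.2 ⟨by linarith, by linarith⟩
  have hGc : ∀ n, Continuous fun x => F n x - birkhoff T f n x :=
    fun n => (hF n).sub (continuous_birkhoff hT hf n)
  refine ⟨fun hBVf => ⟨fun htend => ?_, fun ⟨K, hK⟩ => tendsto_iSup_abs_div_of_bounded hK⟩,
    fun hnBV ⟨K, hK⟩ => hnBV (HasBoundedVariation.of_abs_sub_le hBV hK)⟩
  exact (hFC.sub_birkhoff f).exists_bound_of_tendsto hT hClosing hz hGc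
    (HasBoundedVariation.sub hBV hBVf) (tendsto_div_of_tendsto_iSup_abs_div hGc htend)

theorem statement1 {X : Type*} [MetricSpace X] [CompactSpace X]
    (T : X → X) (hT : Continuous T)
    (hClosing : ∀ ε > (0 : ℝ), ∃ δ > (0 : ℝ), ∀ (x : X) (n : ℕ), 1 ≤ n →
      dist (T^[n] x) x < δ →
      ∃ y : X, T^[n] y = y ∧ ∀ k < n, dist (T^[k] x) (T^[k] y) < ε)
    (hDense : ∃ x : X, Dense (Set.range fun n : ℕ => T^[n] x))
    (F : ℕ → X → ℝ) (hF : ∀ n, Continuous (F n))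
    (C : ℝ) (hC : 0 < C)
    (hAA : ∀ (x : X) (n m : ℕ), 1 ≤ n → 1 ≤ m →
      -C + F n x + F m (T^[n] x) ≤ F (n + m) x ∧
        F (n + m) x ≤ F n x + F m (T^[n] x) + C)
    (hBV : ∃ ε > (0 : ℝ), ∃ M > (0 : ℝ), ∀ (n : ℕ), 1 ≤ n → ∀ x y : X,
      (∀ k < n, dist (T^[k] x) (T^[k] y) < ε) → |F n x - F n y| ≤ M)
    (f : X → ℝ) (hf : Continuous f) :
    ((∃ ε > (0 : ℝ), ∃ M > (0 : ℝ), ∀ (n : ℕ), 1 ≤ n → ∀ x y : X,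
        (∀ k < n, dist (T^[k] x) (T^[k] y) < ε) →
          |birkhoff T f n x - birkhoff T f n y| ≤ M) →
      (Tendsto (fun n : ℕ => (⨆ x : X, |F n x - birkhoff T f n x|) / (n : ℝ))
          atTop (nhds 0) ↔
        ∃ K : ℝ, ∀ (n : ℕ), 1 ≤ n → ∀ x : X, |F n x - birkhoff T f n x| ≤ K)) ∧
    ((¬ ∃ ε > (0 : ℝ), ∃ M > (0 : ℝ), ∀ (n : ℕ), 1 ≤ n → ∀ x y : X,
        (∀ k < n, dist (T^[k] x) (T^[k] y) < ε) →
          |birkhoff T f n x - birkhoff T f n y| ≤ M) →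
      ¬ ∃ K : ℝ, ∀ (n : ℕ), 1 ≤ n → ∀ x : X, |F n x - birkhoff T f n x| ≤ K) :=
  statement1_general T hT hClosing hDense F hF C hAA hBV f hf
end

section
/- Let σ be the left-sided full shift on Σ^ℕ over a finite alphabet Σ = {1,…,k}, let (f_n)_{n≥1} be a sequence of functions on Σ^ℕ, and let μ be a Borel measure on Σ^ℕ that is Gibbs with respect to (f_n) with constant K ≥ 1 and pressure constant P ∈ ℝ. If μ is quasi-Bernoulli with constant C' ≥ 1, then the sequence (f_n)_{n≥1} is almost additive with respect to σ; explicitly, |f_{n+m}(x) − f_n(x) − f_m(σ^n(x))| ≤ log(K³C') for all x ∈ Σ^ℕ and all m, n ≥ 1. -/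
open MeasureTheory

/-- The left-sided full shift on `ℕ → Fin k`. -/
def shiftMap {k : ℕ} : (ℕ → Fin k) → (ℕ → Fin k) := fun x i => x (i + 1)

/-- The `n`-cylinder of a point `x`: sequences agreeing with `x` in the first
`n` coordinates. -/
def cyl {k : ℕ} (x : ℕ → Fin k) (n : ℕ) : Set (ℕ → Fin k) :=
  {y | ∀ j < n, y j = x j}

/-- The cylinder set of a finite word `w`: sequences beginning with `w`. -/
def wordCyl {k : ℕ} (w : List (Fin k)) : Set (ℕ → Fin k) :=
  {y | ∀ j : Fin w.length, y j.val = w.get j}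

lemma shift_iter {k : ℕ} (x : ℕ → Fin k) : ∀ n i, shiftMap^[n] x i = x (i + n) := by
  intro n
  induction n with
  | zero => simp
  | succ n ih =>
    intro i
    rw [Function.iterate_succ_apply']
    show shiftMap^[n] x (i+1) = x (i + (n+1))
    rw [ih]
    ring_nf

lemma mem_wordCyl_ofFn {k n : ℕ} (g : Fin n → Fin k) (y : ℕ → Fin k) :
    y ∈ wordCyl (List.ofFn g) ↔ ∀ j : Fin n, y j = g j := by
  simp [wordCyl, List.get_ofFn]
  constructor
  · intro h j; have := h ⟨j.val, by simp⟩; simpa using this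
  · intro h j; have := h ⟨j.val, by simpa using j.isLt⟩; simpa using this

lemma cyl_eq_wordCyl {k : ℕ} (x : ℕ → Fin k) (n : ℕ) :
    cyl x n = wordCyl (List.ofFn fun i : Fin n => x i) := by
  ext y
  rw [mem_wordCyl_ofFn]
  constructor
  · intro h j; exact h j.val j.isLt
  · intro h j hj; exact h ⟨j, hj⟩

lemma words_append {k : ℕ} (x : ℕ → Fin k) (n m : ℕ) :
    (List.ofFn fun i : Fin (n + m) => x i) =
      (List.ofFn fun i : Fin n => x i) ++
        (List.ofFn fun i : Fin m => shiftMap^[n] x i) := by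
  rw [List.ofFn_add]
  congr 1
  refine congrArg List.ofFn (funext fun j => ?_)
  rw [shift_iter]
  congr 1
  simp [Fin.natAdd]
  omega

theorem statement14 {k : ℕ} (hk : 1 ≤ k)
    (f : ℕ → (ℕ → Fin k) → ℝ)
    (μ : Measure (ℕ → Fin k)) (K : ℝ) (hK : 1 ≤ K) (P : ℝ)
    (hGibbs : ∀ (x : ℕ → Fin k) (n : ℕ), 1 ≤ n →
      K⁻¹ ≤ (μ (cyl x n)).toReal / Real.exp (-(n : ℝ) * P + f n x) ∧
        (μ (cyl x n)).toReal / Real.exp (-(n : ℝ) * P + f n x) ≤ K)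
    (C' : ℝ) (hC' : 1 ≤ C')
    (hQB : (∀ j : Fin k, 0 < μ (wordCyl [j])) ∧
      ∀ w v : List (Fin k), w ≠ [] → v ≠ [] →
        (C')⁻¹ ≤ (μ (wordCyl (w ++ v))).toReal /
            ((μ (wordCyl w)).toReal * (μ (wordCyl v)).toReal) ∧
          (μ (wordCyl (w ++ v))).toReal /
            ((μ (wordCyl w)).toReal * (μ (wordCyl v)).toReal) ≤ C') :
    ∀ (x : ℕ → Fin k) (n m : ℕ), 1 ≤ n → 1 ≤ m →
      |f (n + m) x - f n x - f m (shiftMap^[n] x)| ≤ Real.log (K ^ 3 * C') := by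
  intro x n m hn hm
  have hKpos : (0:ℝ) < K := lt_of_lt_of_le one_pos hK
  have hCpos : (0:ℝ) < C' := lt_of_lt_of_le one_pos hC'
  set w : List (Fin k) := List.ofFn fun i : Fin n => x i with hwdef
  set v : List (Fin k) := List.ofFn fun i : Fin m => shiftMap^[n] x i with hvdef
  have hw : cyl x n = wordCyl w := cyl_eq_wordCyl x n
  have hv : cyl (shiftMap^[n] x) m = wordCyl v := cyl_eq_wordCyl _ m
  have hwv : cyl x (n + m) = wordCyl (w ++ v) := by
    rw [cyl_eq_wordCyl, words_append]
  have hwne : w ≠ [] := by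
    intro h; apply_fun List.length at h; simp [hwdef] at h; omega
  have hvne : v ≠ [] := by
    intro h; apply_fun List.length at h; simp [hvdef] at h; omega
  obtain ⟨hq1, hq2⟩ := hQB.2 w v hwne hvne
  rw [← hwv, ← hw, ← hv] at hq1 hq2
  set A := (μ (cyl x (n + m))).toReal with hAdef
  set B := (μ (cyl x n)).toReal with hBdef
  set Cv := (μ (cyl (shiftMap^[n] x) m)).toReal with hCvdef
  set E1 := Real.exp (-((n + m : ℕ) : ℝ) * P + f (n + m) x) with hE1def
  set E2 := Real.exp (-(n : ℝ) * P + f n x) with hE2def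
  set E3 := Real.exp (-(m : ℝ) * P + f m (shiftMap^[n] x)) with hE3def
  have hE1 : 0 < E1 := Real.exp_pos _
  have hE2 : 0 < E2 := Real.exp_pos _
  have hE3 : 0 < E3 := Real.exp_pos _
  obtain ⟨g1l, g1u⟩ := hGibbs x (n + m) (by omega)
  obtain ⟨g2l, g2u⟩ := hGibbs x n hn
  obtain ⟨g3l, g3u⟩ := hGibbs (shiftMap^[n] x) m hm
  have hA : 0 < A := by
    have h : 0 < A / E1 := lt_of_lt_of_le (inv_pos.mpr hKpos) g1l
    rcases div_pos_iff.mp h with ⟨h1, _⟩ | ⟨_, h2⟩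
    · exact h1
    · linarith
  have hB : 0 < B := by
    have h : 0 < B / E2 := lt_of_lt_of_le (inv_pos.mpr hKpos) g2l
    rcases div_pos_iff.mp h with ⟨h1, _⟩ | ⟨_, h2⟩
    · exact h1
    · linarith
  have hCv : 0 < Cv := by
    have h : 0 < Cv / E3 := lt_of_lt_of_le (inv_pos.mpr hKpos) g3l
    rcases div_pos_iff.mp h with ⟨h1, _⟩ | ⟨_, h2⟩
    · exact h1
    · linarith
  -- derived linear inequalities
  have hAE1 : A ≤ K * E1 := by
    have := (div_le_iff₀ hE1).mp g1u; linarith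
  have hBE2 : B ≤ K * E2 := by
    have := (div_le_iff₀ hE2).mp g2u; linarith
  have hCvE3 : Cv ≤ K * E3 := by
    have := (div_le_iff₀ hE3).mp g3u; linarith
  have hE1A : E1 ≤ K * A := by
    have h := (le_div_iff₀ hE1).mp g1l
    calc E1 = K * (K⁻¹ * E1) := by field_simp
      _ ≤ K * A := by apply mul_le_mul_of_nonneg_left h hKpos.le
  have hE2B : E2 ≤ K * B := by
    have h := (le_div_iff₀ hE2).mp g2l
    calc E2 = K * (K⁻¹ * E2) := by field_simp
      _ ≤ K * B := by apply mul_le_mul_of_nonneg_left h hKpos.le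
  have hE3Cv : E3 ≤ K * Cv := by
    have h := (le_div_iff₀ hE3).mp g3l
    calc E3 = K * (K⁻¹ * E3) := by field_simp
      _ ≤ K * Cv := by apply mul_le_mul_of_nonneg_left h hKpos.le
  have hBC : 0 < B * Cv := mul_pos hB hCv
  have hABC : A ≤ C' * (B * Cv) := by
    have := (div_le_iff₀ hBC).mp hq2; linarith
  have hBCA : B * Cv ≤ C' * A := by
    have h := (le_div_iff₀ hBC).mp hq1
    calc B * Cv = C' * (C'⁻¹ * (B * Cv)) := by field_simp
      _ ≤ C' * A := by apply mul_le_mul_of_nonneg_left h hCpos.le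
  have hup : E1 ≤ K ^ 3 * C' * (E2 * E3) := by
    calc E1 ≤ K * A := hE1A
      _ ≤ K * (C' * (B * Cv)) := by gcongr
      _ ≤ K * (C' * ((K * E2) * (K * E3))) := by gcongr
      _ = K ^ 3 * C' * (E2 * E3) := by ring
  have hlo : E2 * E3 ≤ K ^ 3 * C' * E1 := by
    calc E2 * E3 ≤ (K * B) * (K * Cv) := by gcongr
      _ = K ^ 2 * (B * Cv) := by ring
      _ ≤ K ^ 2 * (C' * A) := by gcongr
      _ ≤ K ^ 2 * (C' * (K * E1)) := by gcongr
      _ = K ^ 3 * C' * E1 := by ring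
  have hM : (0:ℝ) < K ^ 3 * C' := by positivity
  have hE23 : 0 < E2 * E3 := mul_pos hE2 hE3
  have hd : f (n + m) x - f n x - f m (shiftMap^[n] x) =
      Real.log (E1 / (E2 * E3)) := by
    rw [Real.log_div hE1.ne' hE23.ne', Real.log_mul hE2.ne' hE3.ne',
      hE1def, hE2def, hE3def, Real.log_exp, Real.log_exp, Real.log_exp]
    push_cast; ring
  rw [hd, abs_le]
  constructor
  · rw [← Real.log_inv]
    apply Real.log_le_log (by positivity)
    rw [le_div_iff₀ hE23]
    calc (K ^ 3 * C')⁻¹ * (E2 * E3) ≤ (K ^ 3 * C')⁻¹ * (K ^ 3 * C' * E1) := by gcongr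
      _ = E1 := by field_simp
  · apply Real.log_le_log (by positivity)
    rw [div_le_iff₀ hE23]
    linarith
end
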